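/- For logarithmic loss, the benefit of additional side information Y given common side information W equals conditional mutual information: inf_{X̂₁(W)} E[ℓ_log(X, X̂₁(W))] - inf_{X̂₂(Y,W)} E[ℓ_log(X, X̂₂(Y,W))] = I(X; Y | W), where estimates take values in Γ_n. -/

import Mathlib

open scoped BigOperators

def IsDist {α : Type*} [Fintype α] (p : α → ℝ) : Prop :=
  (∀ a, 0 ≤ p a) ∧ ∑ a, p a = 1

noncomputable def logLoss {α : Type*} (Q : α → ℝ) (x : α) : EReal :=
  if Q x = 0 then ⊤ else ((-Real.log (Q x) : ℝ) : EReal)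

noncomputable def negEnt {α : Type*} [Fintype α] (p : α → ℝ) : ℝ :=
  ∑ a, p a * Real.log (p a)

noncomputable def ent {α : Type*} [Fintype α] (p : α → ℝ) : ℝ := -negEnt p

noncomputable def margX {α β : Type*} [Fintype β] (p : α × β → ℝ) (x : α) : ℝ := ∑ y, p (x, y)

noncomputable def margY {α β : Type*} [Fintype α] (p : α × β → ℝ) (y : β) : ℝ := ∑ x, p (x, y)

noncomputable def condX {α β : Type*} [Fintype α] (p : α × β → ℝ) (y : β) (x : α) : ℝ :=
  p (x, y) / margY p y

noncomputable def mutInfo {α β : Type*} [Fintype α] [Fintype β] (p : α × β → ℝ) : ℝ :=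
  ent (margX p) + ent (margY p) - ent p

/-- Probability that `f = u` under the mass function `p`. -/
noncomputable def pmf {Ω U : Type*} [Fintype Ω] [DecidableEq U]
    (p : Ω → ℝ) (f : Ω → U) (u : U) : ℝ :=
  ∑ ω ∈ Finset.univ.filter fun ω => f ω = u, p ω

/-- Conditional mutual information `I(f ; g | h)` (natural logarithm). -/
noncomputable def condMI {Ω U V W : Type*} [Fintype Ω] [Fintype U] [Fintype V] [Fintype W]
    [DecidableEq U] [DecidableEq V] [DecidableEq W]
    (p : Ω → ℝ) (f : Ω → U) (g : Ω → V) (h : Ω → W) : ℝ :=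
  ∑ u, ∑ v, ∑ w,
    pmf p (fun ω => (f ω, g ω, h ω)) (u, v, w) *
      Real.log ((pmf p (fun ω => (f ω, g ω, h ω)) (u, v, w) * pmf p h w) /
        (pmf p (fun ω => (f ω, h ω)) (u, w) * pmf p (fun ω => (g ω, h ω)) (v, w)))

/-!
Conditional on `S = s`, the expected log loss of a guess `q` exceeds that of the conditional
law `p(· | s)` by the relative entropy `D(p(· | s) ‖ q) ≥ 0` (Gibbs' inequality, from
`log t ≤ t - 1`). Both minimal expected losses are therefore conditional entropies, and their
difference `H(X | W) - H(X | Y, W)` is `I(X; Y | W)`.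
-/

open Finset

namespace EReal

lemma coe_finset_sum {ι : Type*} (s : Finset ι) (f : ι → ℝ) :
    ((∑ i ∈ s, f i : ℝ) : EReal) = ∑ i ∈ s, (f i : EReal) :=
  map_sum (⟨⟨Real.toEReal, coe_zero⟩, coe_add⟩ : ℝ →+ EReal) f s

lemma sum_coe_mul_of_nonneg {ι : Type*} (s : Finset ι) {f : ι → ℝ} (hf : ∀ i ∈ s, 0 ≤ f i)
    (c : EReal) : ∑ i ∈ s, (f i : EReal) * c = ((∑ i ∈ s, f i : ℝ) : EReal) * c := by
  classical
  induction s using Finset.induction_on with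
  | empty => simp
  | insert i s hi ih =>
    rw [sum_insert hi, sum_insert hi, ih fun j hj => hf j (mem_insert_of_mem hj), coe_add,
      right_distrib_of_nonneg (EReal.coe_nonneg.2 (hf i (mem_insert_self i s)))
        (EReal.coe_nonneg.2 (sum_nonneg fun j hj => hf j (mem_insert_of_mem hj)))]

end EReal

lemma IsDist.nonempty {α : Type*} [Fintype α] {p : α → ℝ} (hp : IsDist p) : Nonempty α := by
  by_contra h
  rw [not_nonempty_iff] at h
  simpa using hp.2

lemma isDist_uniform (α : Type*) [Fintype α] [Nonempty α] :
    IsDist fun _ : α => (Fintype.card α : ℝ)⁻¹ :=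
  ⟨fun _ => by positivity, by simp [card_univ]⟩

/-- Pointwise Gibbs inequality, from `log t ≤ t - 1` at `t = q m / p`. -/
lemma mul_neg_log_div_le {p m q : ℝ} (hp : 0 ≤ p) (hpm : p ≤ m) (hq : 0 < q) :
    p * -Real.log (p / m) ≤ p * -Real.log q + (q * m - p) := by
  rcases hp.eq_or_lt with rfl | hp
  · simpa using mul_nonneg hq.le hpm
  have hm : 0 < m := hp.trans_le hpm
  have key := Real.log_le_sub_one_of_pos (show 0 < q / (p / m) by positivity)
  rw [Real.log_div hq.ne' (by positivity)] at key
  have hscale : p * (q / (p / m) - 1) = q * m - p := by field_simp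
  nlinarith [mul_le_mul_of_nonneg_left key hp.le]

section CondEnt

variable {A S : Type*} [Fintype A] {p : A × S → ℝ}

lemma le_margY (h0 : ∀ z, 0 ≤ p z) (a : A) (s : S) : p (a, s) ≤ margY p s :=
  single_le_sum (f := fun a => p (a, s)) (fun _ _ => h0 _) (mem_univ a)

lemma isDist_condX (h0 : ∀ z, 0 ≤ p z) {s : S} (hs : margY p s ≠ 0) : IsDist (condX p s) :=
  ⟨fun _ => div_nonneg (h0 _) (sum_nonneg fun _ _ => h0 _), by
    simp only [condX]
    rw [← sum_div, ← margY, div_self hs]⟩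

lemma coe_mul_neg_log_condX_le (h0 : ∀ z, 0 ≤ p z) {q : A → ℝ} (hq : ∀ a, 0 ≤ q a)
    (a : A) (s : S) :
    ((p (a, s) * -Real.log (condX p s a) : ℝ) : EReal)
      ≤ (p (a, s) : EReal) * logLoss q a + ((q a * margY p s - p (a, s) : ℝ) : EReal) := by
  rcases (hq a).eq_or_lt with hqa | hqa
  · rcases (h0 (a, s)).eq_or_lt with hpa | hpa
    · simp [← hpa, ← hqa]
    · rw [logLoss, if_pos hqa.symm, EReal.coe_mul_top_of_pos hpa, EReal.top_add_coe]
      exact le_top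
  · rw [logLoss, if_neg hqa.ne', ← EReal.coe_mul, ← EReal.coe_add, EReal.coe_le_coe_iff]
    exact mul_neg_log_div_le (h0 _) (le_margY h0 a s) hqa

variable [Fintype S]

/-- The conditional entropy `H(A | S)`. -/
noncomputable def condEnt (p : A × S → ℝ) : ℝ :=
  ∑ z, p z * -Real.log (condX p z.2 z.1)

/-- Expected log loss of the guess `f s` for `A` upon observing `S = s`. -/
noncomputable def expectedLogLoss (p : A × S → ℝ) (f : S → A → ℝ) : EReal :=
  ∑ z, (p z : EReal) * logLoss (f z.2) z.1

lemma condEnt_le_expectedLogLoss (h0 : ∀ z, 0 ≤ p z) {f : S → A → ℝ} (hf : ∀ s, IsDist (f s)) :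
    (condEnt p : EReal) ≤ expectedLogLoss p f := by
  have hslack : ∑ z : A × S, (f z.2 z.1 * margY p z.2 - p z) = 0 := by
    rw [Fintype.sum_prod_type_right]
    refine sum_eq_zero fun s _ => ?_
    dsimp only
    rw [sum_sub_distrib, ← sum_mul, (hf s).2, one_mul, margY, sub_self]
  calc (condEnt p : EReal)
      ≤ ∑ z : A × S, ((p z : EReal) * logLoss (f z.2) z.1
          + ((f z.2 z.1 * margY p z.2 - p z : ℝ) : EReal)) := by
        rw [condEnt, EReal.coe_finset_sum]
        exact sum_le_sum fun z _ => coe_mul_neg_log_condX_le h0 (hf z.2).1 z.1 z.2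
    _ = expectedLogLoss p f := by
        rw [sum_add_distrib, ← EReal.coe_finset_sum, hslack, EReal.coe_zero, add_zero,
          expectedLogLoss]

lemma expectedLogLoss_eq_condEnt (h0 : ∀ z, 0 ≤ p z) {f : S → A → ℝ}
    (hf : ∀ s, margY p s ≠ 0 → f s = condX p s) : expectedLogLoss p f = condEnt p := by
  rw [expectedLogLoss, condEnt, EReal.coe_finset_sum]
  refine sum_congr rfl fun ⟨a, s⟩ _ => ?_
  rcases (h0 (a, s)).eq_or_lt with hpa | hpa
  · simp [← hpa]
  have hm : 0 < margY p s := hpa.trans_le (le_margY h0 a s)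
  have hc : 0 < condX p s a := div_pos hpa hm
  rw [hf s hm.ne', logLoss, if_neg hc.ne', EReal.coe_mul]

lemma iInf_expectedLogLoss_eq_condEnt [Nonempty A] (h0 : ∀ z, 0 ≤ p z) :
    ⨅ f : S → {q : A → ℝ // IsDist q}, expectedLogLoss p (fun s => (f s).1) = condEnt p := by
  classical
  refine le_antisymm ?_ (le_iInf fun f => condEnt_le_expectedLogLoss h0 fun s => (f s).2)
  let bayes : S → {q : A → ℝ // IsDist q} := fun s =>
    if hs : margY p s = 0 then ⟨_, isDist_uniform A⟩ else ⟨condX p s, isDist_condX h0 hs⟩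
  refine (iInf_le _ bayes).trans_eq (expectedLogLoss_eq_condEnt h0 fun s hs => ?_)
  simp only [bayes, dif_neg hs]

end CondEnt

lemma expectedLogLoss_comp_snd {A B S : Type*} [Fintype A] [Fintype B] [Fintype S]
    {p : A × B × S → ℝ} (h0 : ∀ z, 0 ≤ p z) (f : S → A → ℝ) :
    expectedLogLoss p (fun bs : B × S => f bs.2)
      = expectedLogLoss (fun z : A × S => ∑ b, p (z.1, b, z.2)) f := by
  simp only [expectedLogLoss, Fintype.sum_prod_type]
  refine sum_congr rfl fun a _ => ?_
  rw [sum_comm]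
  exact sum_congr rfl fun s _ => EReal.sum_coe_mul_of_nonneg _ (fun b _ => h0 _) _

lemma mul_neg_log_div_sub_mul_neg_log_div {p a b c : ℝ} (hp : 0 ≤ p) (ha : p ≤ a) (hb : p ≤ b)
    (hc : a ≤ c) :
    p * -Real.log (a / c) - p * -Real.log (p / b) = p * Real.log (p * c / (a * b)) := by
  rcases hp.eq_or_lt with rfl | hp
  · simp
  have ha' := hp.trans_le ha
  have hb' := hp.trans_le hb
  have hc' := ha'.trans_le hc
  rw [Real.log_div ha'.ne' hc'.ne', Real.log_div hp.ne' hb'.ne',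
    Real.log_div (by positivity) (by positivity), Real.log_mul hp.ne' hc'.ne',
    Real.log_mul ha'.ne' hb'.ne']
  ring

section ChainRule

variable {X Y W : Type*} [Fintype X] [Fintype Y] [Fintype W] (p : X × Y × W → ℝ)

lemma pmf_self [DecidableEq X] [DecidableEq Y] [DecidableEq W] (u : X) (v : Y) (w : W) :
    pmf p (fun z => (z.1, z.2.1, z.2.2)) (u, v, w) = p (u, v, w) := by
  simp [pmf, sum_filter]

lemma pmf_fst_thd [DecidableEq X] [DecidableEq W] (u : X) (w : W) :
    pmf p (fun z => (z.1, z.2.2)) (u, w) = ∑ v, p (u, v, w) := by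
  simp [pmf, sum_filter, Fintype.sum_prod_type, ite_and]

lemma pmf_snd_thd [DecidableEq Y] [DecidableEq W] (v : Y) (w : W) :
    pmf p (fun z => (z.2.1, z.2.2)) (v, w) = ∑ u, p (u, v, w) := by
  simp [pmf, sum_filter, Fintype.sum_prod_type]

lemma pmf_thd [DecidableEq W] (w : W) :
    pmf p (fun z => z.2.2) w = ∑ u, ∑ v, p (u, v, w) := by
  simp [pmf, sum_filter, Fintype.sum_prod_type]

/-- `I(X; Y | W) = H(X | W) - H(X | Y, W)`. -/
lemma condEnt_sub_condEnt_eq_condMI [DecidableEq X] [DecidableEq Y] [DecidableEq W]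
    (h0 : ∀ z, 0 ≤ p z) :
    condEnt (fun z : X × W => ∑ y, p (z.1, y, z.2)) - condEnt p
      = condMI p (fun z => z.1) (fun z => z.2.1) (fun z => z.2.2) := by
  simp only [condEnt, condMI, condX, margY, pmf_self, pmf_fst_thd, pmf_snd_thd, pmf_thd,
    Fintype.sum_prod_type, ← sum_sub_distrib]
  refine sum_congr rfl fun u _ => ?_
  conv_lhs => enter [1]; simp only [sum_mul]
  rw [sum_comm, ← sum_sub_distrib]
  refine sum_congr rfl fun v _ => ?_
  rw [← sum_sub_distrib]
  refine sum_congr rfl fun w _ => ?_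
  have hXW : p (u, v, w) ≤ ∑ v', p (u, v', w) :=
    single_le_sum (f := fun v' => p (u, v', w)) (fun _ _ => h0 _) (mem_univ v)
  have hW : ∑ v', p (u, v', w) ≤ ∑ u', ∑ v', p (u', v', w) :=
    single_le_sum (f := fun u' => ∑ v', p (u', v', w))
      (fun _ _ => sum_nonneg fun _ _ => h0 _) (mem_univ u)
  exact mul_neg_log_div_sub_mul_neg_log_div (h0 _) hXW (le_margY h0 u (v, w)) hW

end ChainRule

/-- For logarithmic loss, the benefit of additional side information `Y`
given common side information `W` equals the conditional mutual information
`I(X; Y | W)`. -/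
theorem log_loss_benefit_given_common_side_info {X Y W : Type*}
    [Fintype X] [Fintype Y] [Fintype W] [DecidableEq X] [DecidableEq Y] [DecidableEq W]
    (p : X × Y × W → ℝ) (hp : IsDist p) :
    (⨅ f : W → {q : X → ℝ // IsDist q},
        ∑ z : X × Y × W, (p z : EReal) * logLoss (f z.2.2).1 z.1)
      - (⨅ g : Y × W → {q : X → ℝ // IsDist q},
          ∑ z : X × Y × W, (p z : EReal) * logLoss (g z.2).1 z.1)
      = ((condMI p (fun z => z.1) (fun z => z.2.1) (fun z => z.2.2) : ℝ) : EReal) := by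
  have : Nonempty X := ⟨hp.nonempty.some.1⟩
  have h0 := hp.1
  have h0W : ∀ z : X × W, 0 ≤ ∑ y, p (z.1, y, z.2) := fun _ => sum_nonneg fun _ _ => h0 _
  have hWonly : (⨅ f : W → {q : X → ℝ // IsDist q},
        ∑ z : X × Y × W, (p z : EReal) * logLoss (f z.2.2).1 z.1)
      = condEnt (fun z : X × W => ∑ y, p (z.1, y, z.2)) := by
    rw [← iInf_expectedLogLoss_eq_condEnt h0W]
    exact iInf_congr fun f => expectedLogLoss_comp_snd h0 fun w => (f w).1
  have hYW : (⨅ g : Y × W → {q : X → ℝ // IsDist q},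
        ∑ z : X × Y × W, (p z : EReal) * logLoss (g z.2).1 z.1) = condEnt p :=
    iInf_expectedLogLoss_eq_condEnt h0
  rw [hWonly, hYW, ← EReal.coe_sub, condEnt_sub_condEnt_eq_condMI p h0]
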